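/- arXiv:0805.4299 — 4 statements merged into one kernel-verified Lean document; each statement's English description precedes it below -/
import Mathlib

section
/- Let x, y, t be real numbers with x > 0, y > 0 and t ≥ 0, and let n ∈ ℕ. Then ∑_{k=0}^{n} A_k(x,t) · A_{n-k}(y,t) = A_n(x+y, t). -/
/-!
Clearing the denominator `x + n t` turns `A_n(·, t)` into a polynomial `P_n` with
`P_{n+1}(0) = 0` and `P_{n+1}(x + 1) - P_{n+1}(x) = P_n(x + t)`. Inducting on `n`, the difference
of the two sides of the convolution identity, as a polynomial in `x`, is therefore invariant under
`x ↦ x + 1` and vanishes at `0`; so it vanishes on `ℕ`, hence identically.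
-/

/-- The generalized binomial coefficient `binom(z, n) = z(z-1)⋯(z-n+1)/n!` for real `z`. -/
noncomputable def genBinom (z : ℝ) (n : ℕ) : ℝ :=
  (descPochhammer ℝ n).eval z / (Nat.factorial n)

/-- `A_n(x,t) := (x/(x+nt)) · binom(x+nt, n)`, with `A_0(x,t) := 1`. -/
noncomputable def rothe (n : ℕ) (x t : ℝ) : ℝ :=
  if n = 0 then 1 else x / (x + n * t) * genBinom (x + n * t) n

open Polynomial Finset

theorem Polynomial.eq_zero_of_eval_natCast_succ_eq {R : Type*} [CommRing R] [IsDomain R]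
    [CharZero R] {p : R[X]} (h0 : p.eval 0 = 0)
    (hstep : ∀ k : ℕ, p.eval ((k : R) + 1) = p.eval (k : R)) : p = 0 := by
  have hroot : ∀ k : ℕ, p.IsRoot (k : R) := by
    intro k
    induction k with
    | zero => simpa using h0
    | succ k ih => rw [IsRoot, Nat.cast_succ, hstep, ih]
  refine p.eq_zero_of_infinite_isRoot
    ((Set.infinite_range_of_injective Nat.cast_injective).mono ?_)
  rintro _ ⟨k, rfl⟩
  exact hroot k

section Rothe

variable {K : Type*} [Field K] [CharZero K]

/-- `A_n(x,t)` with the factor `x + n t` cancelled against the top factor of the binomial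
coefficient: `x (x + n t - 1)(x + n t - 2)⋯(x + n t - n + 1) / n!`, a polynomial in `x`. -/
noncomputable def rothePoly (t : K) : ℕ → K[X]
  | 0 => 1
  | m + 1 =>
    C ((m + 1).factorial : K)⁻¹ * X * (descPochhammer K m).comp (X + C ((m + 1) * t - 1))

omit [CharZero K] in
@[simp]
theorem rothePoly_zero (t : K) : rothePoly t 0 = 1 := rfl

theorem rothePoly_succ_eval (t x : K) (m : ℕ) :
    (rothePoly t (m + 1)).eval x =
      x * (descPochhammer K m).eval (x + (m + 1) * t - 1) / (m + 1).factorial := by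
  simp only [rothePoly, eval_mul, eval_C, eval_X, eval_comp, eval_add]
  rw [add_sub_assoc]
  ring

theorem rothePoly_succ_eval_zero (t : K) (m : ℕ) : (rothePoly t (m + 1)).eval 0 = 0 := by
  simp [rothePoly_succ_eval]

theorem rothePoly_succ_eval_add_one_sub (t x : K) (n : ℕ) :
    (rothePoly t (n + 1)).eval (x + 1) - (rothePoly t (n + 1)).eval x =
      (rothePoly t n).eval (x + t) := by
  cases n with
  | zero => simp [rothePoly_succ_eval]
  | succ m =>
    have h_left : ∀ w : K, (descPochhammer K (m + 1)).eval (w + 1) =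
        (w + 1) * (descPochhammer K m).eval w := fun w => by
      simp [descPochhammer_succ_left, eval_comp]
    set w := x + (m + 2) * t - 1 with hw
    rw [rothePoly_succ_eval, rothePoly_succ_eval, rothePoly_succ_eval,
      show x + 1 + ((m + 1 : ℕ) + 1) * t - 1 = w + 1 by rw [hw]; push_cast; ring, h_left,
      show x + ((m + 1 : ℕ) + 1) * t - 1 = w by rw [hw]; push_cast; ring,
      descPochhammer_succ_eval, show x + t + (m + 1) * t - 1 = w by rw [hw]; ring,
      Nat.factorial_succ (m + 1)]
    have hm : ((m + 1 + 1 : ℕ) : K) ≠ 0 := Nat.cast_ne_zero.mpr (Nat.succ_ne_zero _)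
    push_cast at hm ⊢
    field_simp
    rw [hw]
    ring

theorem sum_rothePoly_eval_add_one_sub_mul (t x y : K) (n : ℕ) :
    ∑ k ∈ range (n + 2),
        ((rothePoly t k).eval (x + 1) - (rothePoly t k).eval x) * (rothePoly t (n + 1 - k)).eval y =
      ∑ k ∈ range (n + 1), (rothePoly t k).eval (x + t) * (rothePoly t (n - k)).eval y := by
  rw [sum_range_succ']
  simp only [rothePoly_zero, eval_one, sub_self, zero_mul, add_zero,
    rothePoly_succ_eval_add_one_sub, Nat.add_sub_add_right]

theorem sum_rothePoly_eval_mul (t y : K) (n : ℕ) (x : K) :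
    ∑ k ∈ range (n + 1), (rothePoly t k).eval x * (rothePoly t (n - k)).eval y =
      (rothePoly t n).eval (x + y) := by
  induction n generalizing x with
  | zero => simp
  | succ n ih =>
    set D : K[X] := ∑ k ∈ range (n + 2), rothePoly t k * C ((rothePoly t (n + 1 - k)).eval y) -
      (rothePoly t (n + 1)).comp (X + C y) with hD
    have eval_D (z : K) : D.eval z =
        ∑ k ∈ range (n + 2), (rothePoly t k).eval z * (rothePoly t (n + 1 - k)).eval y -
          (rothePoly t (n + 1)).eval (z + y) := by
      simp [hD, eval_finsetSum, eval_comp]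
    suffices D = 0 by simpa [eval_D, sub_eq_zero] using congrArg (eval x) this
    refine eq_zero_of_eval_natCast_succ_eq ?_ fun k => ?_
    · rw [eval_D, sum_range_succ']
      simp [rothePoly_succ_eval_zero]
    · rw [← sub_eq_zero, eval_D, eval_D, sub_sub_sub_comm, ← sum_sub_distrib]
      simp only [← sub_mul]
      rw [sum_rothePoly_eval_add_one_sub_mul, ih, add_right_comm _ t, add_right_comm _ 1,
        rothePoly_succ_eval_add_one_sub, sub_self]

end Rothe

theorem rothe_eq_rothePoly_eval {n : ℕ} {x t : ℝ} (h : x + n * t ≠ 0) :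
    rothe n x t = (rothePoly t n).eval x := by
  cases n with
  | zero => simp [rothe]
  | succ m =>
    rw [rothe, if_neg m.succ_ne_zero, genBinom, rothePoly_succ_eval, descPochhammer_succ_left]
    simp only [eval_mul, eval_X, eval_comp, eval_sub, eval_one]
    push_cast at h ⊢
    field_simp

/-- For `x, y > 0`, `t ≥ 0` and `n ∈ ℕ`,
`∑_{k=0}^{n} A_k(x,t) · A_{n-k}(y,t) = A_n(x+y, t)`. -/
theorem rothe_convolution (x y t : ℝ) (hx : 0 < x) (hy : 0 < y) (ht : 0 ≤ t) (n : ℕ) :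
    ∑ k ∈ Finset.range (n + 1), rothe k x t * rothe (n - k) y t = rothe n (x + y) t := by
  have h_ne {z : ℝ} (hz : 0 < z) (k : ℕ) : z + k * t ≠ 0 := by positivity
  rw [rothe_eq_rothePoly_eval (h_ne (add_pos hx hy) n), ← sum_rothePoly_eval_mul]
  refine sum_congr rfl fun k _ => ?_
  rw [rothe_eq_rothePoly_eval (h_ne hx k), rothe_eq_rothePoly_eval (h_ne hy (n - k))]
end

section
/- Let m ≥ 1, r ≥ 1 and n ∈ ℕ. Then, as an identity of rational numbers, ∑_{n₁+⋯+n_r = n} C^m_{n₁} ⋯ C^m_{n_r} = (r/(r+nm)) · binom(r+nm, n), where the sum runs over all r-tuples (n₁,…,n_r) of nonnegative integers with n₁+⋯+n_r = n and binom denotes the usual binomial coefficient of natural numbers. -/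
/-!
The right-hand side is the Raney number `R(r, n)`. It satisfies the Pascal-type recurrence
`R(r+1, n+1) = R(r, n+1) + R(r+m, n)`, from which a double induction on `n` and `a` gives the
convolution identity `∑_{i+j=n} R(a, i) R(b, j) = R(a+b, n)`. Since `R(1, ·)` is the sequence of
`m`-ary Catalan numbers, its `r`-fold convolution is `R(r, ·)`.
-/

/-- The `n`-th `m`-ary Catalan number `C^m_n = binom(nm, n) / (n(m−1)+1)`, as a rational
number. -/
def mCatalan (m n : ℕ) : ℚ :=
  (Nat.choose (n * m) n : ℚ) / ((n : ℚ) * ((m : ℚ) - 1) + 1)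

open Finset

theorem Finset.Nat.sum_antidiagonalTuple_succ {M : Type*} [AddCommMonoid M] (k n : ℕ)
    (g : (Fin (k + 1) → ℕ) → M) :
    ∑ f ∈ Nat.antidiagonalTuple (k + 1) n, g f =
      ∑ p ∈ antidiagonal n, ∑ f ∈ Nat.antidiagonalTuple k p.2, g (Fin.cons p.1 f) := by
  have hval : (Nat.antidiagonalTuple (k + 1) n).val =
      (antidiagonal n).val.bind fun p => (Nat.antidiagonalTuple k p.2).val.map (Fin.cons p.1) :=
    (Multiset.coe_bind _ _).symm
  simp only [Finset.sum, hval, Multiset.map_bind, Multiset.sum_bind, Multiset.map_map]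
  rfl

theorem Finset.Nat.sum_antidiagonalTuple_succ_prod {R : Type*} [CommSemiring R] (c : ℕ → R)
    (k n : ℕ) :
    ∑ f ∈ Nat.antidiagonalTuple (k + 1) n, ∏ i, c (f i) =
      ∑ p ∈ antidiagonal n, c p.1 * ∑ f ∈ Nat.antidiagonalTuple k p.2, ∏ i, c (f i) := by
  simp only [Nat.sum_antidiagonalTuple_succ, Fin.prod_univ_succ, Fin.cons_zero, Fin.cons_succ,
    mul_sum]

/-- Division by zero makes `raney m 0 0 = 0` rather than the conventional `1`. -/
def raney (m r n : ℕ) : ℚ :=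
  (r : ℚ) / ((r : ℚ) + (n : ℚ) * (m : ℚ)) * (Nat.choose (r + n * m) n : ℚ)

theorem raney_zero_left (m n : ℕ) : raney m 0 n = 0 := by simp [raney]

theorem raney_zero_right (m : ℕ) {r : ℕ} (hr : 0 < r) : raney m r 0 = 1 := by
  simp [raney, hr.ne']

theorem raney_succ_succ {m : ℕ} (hm : 0 < m) (r n : ℕ) :
    raney m (r + 1) (n + 1) = raney m r (n + 1) + raney m (r + m) n := by
  obtain ⟨K, hK⟩ : ∃ K, r + (n + 1) * m = K := ⟨_, rfl⟩
  have hKpos : 0 < K := by rw [← hK]; positivity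
  have hKQ : (r : ℚ) + (n + 1) * m = K := by exact_mod_cast hK
  have habsorb : ((K : ℚ) + 1) * K.choose n = (K.choose n + K.choose (n + 1)) * (n + 1) := by
    exact_mod_cast Nat.choose_succ_succ' K n ▸ Nat.add_one_mul_choose_eq K n
  simp only [raney]
  rw [show r + 1 + (n + 1) * m = K + 1 by omega, hK, show r + m + n * m = K by rw [← hK]; ring,
    Nat.choose_succ_succ']
  push_cast
  rw [show (r : ℚ) + 1 + (n + 1) * m = K + 1 by linarith, hKQ,
    show (r : ℚ) + m + n * m = K by linarith]
  field_simp
  linear_combination (-(m : ℚ)) * habsorb - ((K.choose n : ℚ) + K.choose (n + 1)) * hKQ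

theorem raney_one_succ {m : ℕ} (hm : 0 < m) (n : ℕ) : raney m 1 (n + 1) = raney m m n := by
  simpa [raney_zero_left] using raney_succ_succ hm 0 n

theorem sum_antidiagonal_raney_mul_raney {m a b : ℕ} (hm : 0 < m) (ha : 0 < a) (hb : 0 < b)
    (n : ℕ) : ∑ p ∈ antidiagonal n, raney m a p.1 * raney m b p.2 = raney m (a + b) n := by
  induction n generalizing a with
  | zero =>
    simp [raney_zero_right m ha, raney_zero_right m hb,
      raney_zero_right m (show 0 < a + b by omega)]
  | succ n ih =>
    obtain ⟨a, rfl⟩ := Nat.exists_eq_add_one_of_ne_zero ha.ne'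
    clear ha
    induction a with
    | zero =>
      rw [zero_add, Nat.sum_antidiagonal_succ]
      simp only [raney_one_succ hm, ih hm, raney_zero_right m one_pos, one_mul]
      rw [add_comm 1 b, raney_succ_succ hm, add_comm m]
    | succ a iha =>
      rw [Nat.sum_antidiagonal_succ] at iha ⊢
      simp only [raney_succ_succ hm (a + 1), add_mul, sum_add_distrib,
        ih (a := a + 1 + m) (by omega), raney_zero_right m a.succ_pos,
        raney_zero_right m (a + 1).succ_pos] at iha ⊢
      rw [add_right_comm (a + 1) 1 b, raney_succ_succ hm, add_right_comm (a + 1) m b, ← iha]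
      ring

theorem raney_one {m : ℕ} (hm : 0 < m) (n : ℕ) : raney m 1 n = mCatalan m n := by
  have hle : n ≤ n * m := Nat.le_mul_of_pos_right n hm
  have key := congrArg (Nat.cast : ℕ → ℚ) (Nat.choose_mul_succ_eq (n * m) n)
  push_cast [Nat.cast_sub (by omega : n ≤ n * m + 1)] at key
  have hden : (n : ℚ) * (m - 1) + 1 ≠ 0 := by
    have : (n : ℚ) ≤ n * m := by exact_mod_cast hle
    linarith
  rw [raney, mCatalan, add_comm 1 (n * m), Nat.cast_one]
  field_simp
  linear_combination -key

/-- For `m ≥ 1`, `r ≥ 1` and `n ∈ ℕ`,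
`∑_{n₁+⋯+n_r = n} C^m_{n₁} ⋯ C^m_{n_r} = (r/(r+nm)) · binom(r+nm, n)` in `ℚ`,
the sum running over all `r`-tuples of nonnegative integers summing to `n`. -/
theorem mCatalan_multi_convolution (m r n : ℕ) (hm : 1 ≤ m) (hr : 1 ≤ r) :
    ∑ f ∈ Finset.Nat.antidiagonalTuple r n, ∏ i, mCatalan m (f i)
      = (r : ℚ) / ((r : ℚ) + (n : ℚ) * (m : ℚ)) * (Nat.choose (r + n * m) n : ℚ) := by
  change _ = raney m r n
  induction r, hr using Nat.le_induction generalizing n with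
  | base => simp [raney_one hm]
  | succ r hr ih =>
    rw [Nat.sum_antidiagonalTuple_succ_prod]
    simp_rw [ih, ← raney_one hm]
    rw [sum_antidiagonal_raney_mul_raney hm one_pos hr, add_comm]
end

section
/- Let p ≥ 1 be an integer and define c(p,·,·) by the recursion in the context. Then for all integers k ≥ 0 and 0 ≤ l ≤ k, c(p,k,l) ≤ 2^k · binom(k,l) · (p+k−l)^l · (p+k−1)(p+k−2)⋯(p+1)p, where the last factor is the product ∏_{j=0}^{k−1}(p+j) (equal to 1 when k = 0). -/
/-!
Induction on `k`. For `l = 0` the recursion has a single term and gives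
`c(p,k,0) = 2^k ∏_{j<k} (p+j)` exactly. For `l = m + 1 ≤ k + 1`, put `a = p + k - m - 1 ≥ 0`;
the two terms of the recursion are `2a·c(p,k,m+1)` and `(a+1)a·c(p,k,m)`, and after inserting the
inductive bounds they are absorbed by the two halves of Pascal's rule
`binom(k+1,m+1) = binom(k,m) + binom(k,m+1)` using only `a ≤ a + 1 ≤ p + k`.
-/

/-- The number `c(p,k,l)` of elementary terms with `l` loops in the `k`-fold commutator
expansion of a `p`-particle observable, defined by the recursion
`c(p,0,0) = 1`, `c(p,k,l) = 0` for `l < 0` or `l > k`, and for `k ≥ 1`, `0 ≤ l ≤ k`: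
`c(p,k,l) = 2(p+k−l−1)·c(p,k−1,l) + (p+k−l)(p+k−l−1)·c(p,k−1,l−1)`. -/
noncomputable def loopCount (p : ℕ) : ℕ → ℤ → ℝ
  | 0, l => if l = 0 then 1 else 0
  | k + 1, l =>
      if 0 ≤ l ∧ l ≤ (k : ℤ) + 1 then
        2 * ((p : ℝ) + ((k : ℝ) + 1) - (l : ℝ) - 1) * loopCount p k l
          + ((p : ℝ) + ((k : ℝ) + 1) - (l : ℝ)) * ((p : ℝ) + ((k : ℝ) + 1) - (l : ℝ) - 1)
            * loopCount p k (l - 1)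
      else 0

theorem loopCount_eq_zero_of_neg (p k : ℕ) {l : ℤ} (hl : l < 0) : loopCount p k l = 0 := by
  cases k <;> rw [loopCount, if_neg (by omega)]

theorem loopCount_eq_zero_of_lt (p : ℕ) {k l : ℕ} (hkl : k < l) : loopCount p k l = 0 := by
  cases k <;> rw [loopCount, if_neg (by omega)]

theorem loopCount_succ_zero (p k : ℕ) :
    loopCount p (k + 1) 0 = 2 * (p + k) * loopCount p k 0 := by
  rw [loopCount, if_pos (by omega), loopCount_eq_zero_of_neg p k (by omega : (0 : ℤ) - 1 < 0)]
  push_cast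
  ring

theorem loopCount_succ_succ (p : ℕ) {k m : ℕ} (hm : m ≤ k) :
    loopCount p (k + 1) (m + 1 : ℕ) =
      2 * (p + k - m - 1) * loopCount p k (m + 1 : ℕ)
        + (p + k - m) * (p + k - m - 1) * loopCount p k m := by
  rw [loopCount, if_pos (by omega), Nat.cast_succ, add_sub_cancel_right]
  push_cast
  ring_nf

theorem loopCount_zero_right (p k : ℕ) :
    loopCount p k 0 = 2 ^ k * ∏ j ∈ Finset.range k, ((p : ℝ) + j) := by
  induction k with
  | zero => simp [loopCount]
  | succ k ih => rw [loopCount_succ_zero, ih, Finset.prod_range_succ, pow_succ]; ring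

noncomputable def loopBound (p k l : ℕ) : ℝ :=
  2 ^ k * (k.choose l : ℝ) * ((p : ℝ) + k - l) ^ l * ∏ j ∈ Finset.range k, ((p : ℝ) + j)

theorem loopBound_succ_succ_ge {p k m : ℕ} (ha : (0 : ℝ) ≤ p + k - m - 1) :
    2 * (p + k - m - 1) * loopBound p k (m + 1) + (p + k - m) * (p + k - m - 1) * loopBound p k m
      ≤ loopBound p (k + 1) (m + 1) := by
  set a : ℝ := p + k - m - 1 with ha_def
  set P := ∏ j ∈ Finset.range k, ((p : ℝ) + j)
  have hP : 0 ≤ P := Finset.prod_nonneg fun j _ => by positivity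
  have hac : a + 1 ≤ p + k := by simp [ha_def]
  have hpow : a ^ (m + 1) ≤ (a + 1) ^ (m + 1) := by gcongr; linarith
  have htree : a * a ^ (m + 1) ≤ (a + 1) ^ (m + 1) * (p + k) := by
    rw [mul_comm]; exact mul_le_mul hpow (by linarith) ha (by positivity)
  have hloop : a ≤ 2 * (p + k) := by linarith
  unfold loopBound
  rw [Finset.prod_range_succ, Nat.choose_succ_succ]
  push_cast
  simp only [show (p : ℝ) + k - (m + 1) = a by ring, show (p : ℝ) + k - m = a + 1 by ring,
    show (p : ℝ) + (k + 1) - (m + 1) = a + 1 by ring]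
  calc 2 * a * (2 ^ k * (k.choose (m + 1)) * a ^ (m + 1) * P)
        + (a + 1) * a * (2 ^ k * (k.choose m) * (a + 1) ^ m * P)
      = 2 ^ k * P * (2 * (k.choose (m + 1)) * (a * a ^ (m + 1))
          + (k.choose m) * (a + 1) ^ (m + 1) * a) := by ring
    _ ≤ 2 ^ k * P * (2 * (k.choose (m + 1)) * ((a + 1) ^ (m + 1) * (p + k))
          + (k.choose m) * (a + 1) ^ (m + 1) * (2 * (p + k))) := by gcongr
    _ = _ := by ring

theorem loopCount_le_loopBound_of_lt (p : ℕ) {k l : ℕ} (hkl : k < l) :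
    loopCount p k l ≤ loopBound p k l := by
  simp [loopCount_eq_zero_of_lt p hkl, loopBound, Nat.choose_eq_zero_of_lt hkl]

theorem loopCount_le_loopBound {p : ℕ} (hp : 1 ≤ p) (k l : ℕ) :
    loopCount p k l ≤ loopBound p k l := by
  induction k generalizing l with
  | zero =>
    rcases l with _ | l
    · simp [loopCount, loopBound]
    · exact loopCount_le_loopBound_of_lt p l.succ_pos
  | succ k ih =>
    rcases l with _ | m
    · simp [loopCount_zero_right, loopBound]
    rcases lt_or_ge k m with hkm | hmk
    · exact loopCount_le_loopBound_of_lt p (Nat.succ_lt_succ hkm)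
    have ha : (0 : ℝ) ≤ p + k - m - 1 := by
      have : (m : ℝ) ≤ k := by exact_mod_cast hmk
      have : (1 : ℝ) ≤ p := by exact_mod_cast hp
      linarith
    rw [loopCount_succ_succ p hmk]
    calc _ ≤ 2 * (p + k - m - 1) * loopBound p k (m + 1)
          + (p + k - m) * (p + k - m - 1) * loopBound p k m := by
          gcongr
          · exact ih _
          · exact mul_nonneg (by linarith) ha
          · exact ih _
      _ ≤ loopBound p (k + 1) (m + 1) := loopBound_succ_succ_ge ha

theorem loopCount_le_general (p : ℕ) (hp : 1 ≤ p) (k l : ℕ) :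
    loopCount p k l ≤
      2 ^ k * (Nat.choose k l : ℝ) * ((p : ℝ) + (k : ℝ) - (l : ℝ)) ^ l
        * ∏ j ∈ Finset.range k, ((p : ℝ) + (j : ℝ)) :=
  loopCount_le_loopBound hp k l

/-- For `p ≥ 1` and all `0 ≤ l ≤ k`,
`c(p,k,l) ≤ 2^k · binom(k,l) · (p+k−l)^l · (p+k−1)(p+k−2)⋯(p+1)p`. -/
theorem loopCount_le (p : ℕ) (hp : 1 ≤ p) (k l : ℕ) (hlk : l ≤ k) :
    loopCount p k l ≤
      2 ^ k * (Nat.choose k l : ℝ) * ((p : ℝ) + (k : ℝ) - (l : ℝ)) ^ l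
        * ∏ j ∈ Finset.range k, ((p : ℝ) + (j : ℝ)) :=
  loopCount_le_general p hp k l
end

section
/- Let p, L ∈ ℕ and let x be a real number with 0 ≤ x < 1. Then the series ∑_{k=0}^{∞} (p+k)^L x^k converges and ∑_{k=0}^{∞} (p+k)^L x^k ≤ e^p · L! / (1−x)^{L+1}. -/
/-!
Expanding `(p + k) ^ L` binomially and bounding `j! * C(L, j) * k ^ (L - j)` by the rising
factorial `(k + 1) ⋯ (k + L) = L! * C(k + L, L)` gives `(p + k) ^ L ≤ e ^ p * L! * C(k + L, L)`,
the partial exponential series `∑ p ^ j / j!` being at most `e ^ p`. The claim then follows by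
comparison with the negative binomial series `∑ C(k + L, L) x ^ k = 1 / (1 - x) ^ (L + 1)`.
-/

open Finset Nat

theorem Nat.descFactorial_mul_pow_le_ascFactorial {j n : ℕ} (hj : j ≤ n) (k : ℕ) :
    n.descFactorial j * k ^ (n - j) ≤ (k + 1).ascFactorial n := by
  obtain ⟨m, rfl⟩ := Nat.exists_eq_add_of_le' hj
  -- `(k + 1) ⋯ (k + m + j) = (k + 1) ⋯ (k + m) * (k + m + 1) ⋯ (k + m + j)`, and the two factors
  -- dominate `k ^ m` and `(m + 1) ⋯ (m + j) = (m + j).descFactorial j` respectively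
  rw [Nat.add_sub_cancel, ← ascFactorial_mul_ascFactorial, add_descFactorial_eq_ascFactorial,
    mul_comm]
  exact Nat.mul_le_mul ((Nat.pow_le_pow_left k.le_succ m).trans (pow_succ_le_ascFactorial _ m))
    (ascFactorial_le j (by omega))

theorem Real.add_pow_le_exp_mul_ascFactorial {p : ℝ} (hp : 0 ≤ p) (k L : ℕ) :
    (p + k) ^ L ≤ Real.exp p * (k + 1).ascFactorial L := by
  calc (p + k) ^ L
      = ∑ j ∈ range (L + 1), p ^ j / j ! * (L.descFactorial j * k ^ (L - j) : ℕ) := by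
        rw [add_pow]
        refine sum_congr rfl fun j _ => ?_
        rw [descFactorial_eq_factorial_mul_choose]
        push_cast
        field_simp
    _ ≤ ∑ j ∈ range (L + 1), p ^ j / j ! * (k + 1).ascFactorial L := by
        gcongr with j hj
        exact descFactorial_mul_pow_le_ascFactorial (Nat.lt_succ_iff.mp (mem_range.mp hj)) k
    _ ≤ Real.exp p * (k + 1).ascFactorial L := by
        rw [← sum_mul]
        gcongr
        exact Real.sum_le_exp_of_nonneg hp _

theorem Real.add_pow_le_exp_mul_factorial_mul_choose {p : ℝ} (hp : 0 ≤ p) (k L : ℕ) :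
    (p + k) ^ L ≤ Real.exp p * L ! * (k + L).choose L := by
  have h := add_pow_le_exp_mul_ascFactorial hp k L
  rwa [ascFactorial_eq_factorial_mul_choose, Nat.cast_mul, ← mul_assoc] at h

/-- For `p, L ∈ ℕ` and `0 ≤ x < 1`, the series `∑_{k≥0} (p+k)^L x^k`
converges, and `∑_{k=0}^∞ (p+k)^L x^k ≤ e^p · L! / (1−x)^{L+1}`. -/
theorem tsum_pow_mul_geometric_le (p L : ℕ) (x : ℝ) (hx0 : 0 ≤ x) (hx1 : x < 1) :
    Summable (fun k : ℕ => ((p : ℝ) + (k : ℝ)) ^ L * x ^ k) ∧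
    ∑' k : ℕ, ((p : ℝ) + (k : ℝ)) ^ L * x ^ k
      ≤ Real.exp p * (Nat.factorial L : ℝ) / (1 - x) ^ (L + 1) := by
  have hx : ‖x‖ < 1 := by rwa [Real.norm_of_nonneg hx0]
  have hmajorant := (hasSum_choose_mul_geometric_of_norm_lt_one L hx).mul_left
    (Real.exp p * L !)
  have hle (k : ℕ) :
      ((p : ℝ) + k) ^ L * x ^ k ≤ Real.exp p * L ! * ((k + L).choose L * x ^ k) := by
    rw [← mul_assoc]
    gcongr
    exact Real.add_pow_le_exp_mul_factorial_mul_choose p.cast_nonneg k L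
  have hsum : Summable fun k : ℕ => ((p : ℝ) + k) ^ L * x ^ k :=
    hmajorant.summable.of_nonneg_of_le (fun k => by positivity) hle
  refine ⟨hsum, ?_⟩
  calc ∑' k : ℕ, ((p : ℝ) + k) ^ L * x ^ k
      ≤ Real.exp p * L ! * (1 / (1 - x) ^ (L + 1)) := hasSum_le hle hsum.hasSum hmajorant
    _ = Real.exp p * L ! / (1 - x) ^ (L + 1) := mul_one_div _ _
end
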